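/- arXiv:1111.0432 — 3 statements merged into one kernel-verified Lean document; each statement's English description precedes it below -/
import Mathlib

section
/- Let φ : ℝⁿ → ℝᵈ be a map, ℓ : ℝ → ℝ a convex function, λ > 0, and (t_i, y_i), i = 1..m, data pairs. Define Ψ ∈ ℝ^{m×m} by Ψ_{ij} = ⟨φ(t_i), φ(t_j)⟩. If (α, b) ∈ ℝᵐ × ℝ minimizes F₂(α,b) = (λ/2) αᵀΨα + (1/m) Σ_i ℓ(y_i (Ψ_{i·} α + b)), then with w = Σ_i α_i φ(t_i), the pair (w, b) minimizes F₁(w,b) = (λ/2) wᵀw + (1/m) Σ_i ℓ(y_i (⟨w, φ(t_i)⟩ + b)). -/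
open Matrix Finset

/-! Orthogonally projecting any `w` onto the span of the features `φ (t i)` changes none of the
inner products `⟪w, φ (t i)⟫`, hence none of the loss terms of `F₁`, and does not increase `‖w‖`.
So `F₁` attains its infimum on that span, where `F₁ (∑ j, β j • φ (t j)) = F₂ β`
because `Ψ` is the Gram matrix of the features. -/

theorem exists_sum_smul_inner_eq_and_norm_le {𝕜 E ι : Type*} [RCLike 𝕜] [NormedAddCommGroup E]
    [InnerProductSpace 𝕜 E] [Fintype ι] (v : ι → E) (w : E) :
    ∃ β : ι → 𝕜, (∀ i, inner 𝕜 (∑ j, β j • v j) (v i) = inner 𝕜 w (v i)) ∧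
      ‖∑ j, β j • v j‖ ≤ ‖w‖ := by
  set K := Submodule.span 𝕜 (Set.range v)
  have : FiniteDimensional 𝕜 K := FiniteDimensional.span_of_finite 𝕜 (Set.finite_range v)
  obtain ⟨β, hβ⟩ :=
    (Submodule.mem_span_range_iff_exists_fun 𝕜).1 (K.starProjection_apply_mem w)
  refine ⟨β, fun i => ?_, hβ ▸ K.norm_starProjection_apply_le w⟩
  have h := K.starProjection_inner_eq_zero w (v i) (Submodule.subset_span ⟨i, rfl⟩)
  rw [inner_sub_left, sub_eq_zero] at h
  rw [hβ, h]

theorem exists_sum_smul_dotProduct_eq_and_dotProduct_self_le {ι κ : Type*} [Fintype ι]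
    [Fintype κ] (v : ι → κ → ℝ) (w : κ → ℝ) :
    ∃ β : ι → ℝ, (∀ i, (∑ j, β j • v j) ⬝ᵥ v i = w ⬝ᵥ v i) ∧
      (∑ j, β j • v j) ⬝ᵥ (∑ j, β j • v j) ≤ w ⬝ᵥ w := by
  obtain ⟨β, hinner, hnorm⟩ :=
    exists_sum_smul_inner_eq_and_norm_le (𝕜 := ℝ) (E := EuclideanSpace ℝ κ)
      (fun i => WithLp.toLp 2 (v i)) (WithLp.toLp 2 w)
  refine ⟨β, fun i => ?_, ?_⟩
  · have h := hinner i
    simp only [← WithLp.toLp_smul, ← WithLp.toLp_sum, EuclideanSpace.inner_toLp_toLp] at h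
    simpa [dotProduct_comm] using h
  · have h := pow_le_pow_left₀ (norm_nonneg _) hnorm 2
    rw [← real_inner_self_eq_norm_sq, ← real_inner_self_eq_norm_sq] at h
    simp only [← WithLp.toLp_smul, ← WithLp.toLp_sum, EuclideanSpace.inner_toLp_toLp] at h
    simpa using h

section Gram

variable {ι κ : Type*} [Fintype ι] [Fintype κ] {v : ι → κ → ℝ} {Ψ : Matrix ι ι ℝ}

theorem sum_smul_dotProduct_eq_mulVec (hΨ : ∀ i j, Ψ i j = v i ⬝ᵥ v j) (β : ι → ℝ) (i : ι) :
    (∑ j, β j • v j) ⬝ᵥ v i = (Ψ *ᵥ β) i := by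
  rw [sum_dotProduct, mulVec, dotProduct]
  refine sum_congr rfl fun j _ => ?_
  rw [smul_dotProduct, hΨ, dotProduct_comm, smul_eq_mul, mul_comm]

theorem dotProduct_mulVec_eq_sum_smul_dotProduct_self (hΨ : ∀ i j, Ψ i j = v i ⬝ᵥ v j)
    (β : ι → ℝ) :
    β ⬝ᵥ Ψ *ᵥ β = (∑ j, β j • v j) ⬝ᵥ (∑ j, β j • v j) := by
  simp only [dotProduct_sum, dotProduct_smul, sum_smul_dotProduct_eq_mulVec hΨ, smul_eq_mul]
  rfl

end Gram

theorem p2_minimizer_gives_p1_minimizer_general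
    (n d m : ℕ) (φ : (Fin n → ℝ) → (Fin d → ℝ))
    (ℓ : ℝ → ℝ)
    (lam : ℝ) (hlam : 0 < lam)
    (t : Fin m → (Fin n → ℝ)) (y : Fin m → ℝ)
    (Ψ : Matrix (Fin m) (Fin m) ℝ)
    (hΨ : ∀ i j, Ψ i j = φ (t i) ⬝ᵥ φ (t j))
    (F₂ : (Fin m → ℝ) → ℝ → ℝ)
    (hF₂ : ∀ α b, F₂ α b =
      lam / 2 * (α ⬝ᵥ Ψ.mulVec α) +
      (1 / (m : ℝ)) * ∑ i, ℓ (y i * (Ψ.mulVec α i + b)))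
    (F₁ : (Fin d → ℝ) → ℝ → ℝ)
    (hF₁ : ∀ w b, F₁ w b =
      lam / 2 * (w ⬝ᵥ w) +
      (1 / (m : ℝ)) * ∑ i, ℓ (y i * (w ⬝ᵥ φ (t i) + b)))
    (α : Fin m → ℝ) (b : ℝ)
    (hmin : ∀ α' b', F₂ α b ≤ F₂ α' b') :
    ∀ w' b', F₁ (∑ i, α i • φ (t i)) b ≤ F₁ w' b' := by
  have hF : ∀ β c, F₁ (∑ j, β j • φ (t j)) c = F₂ β c := fun β c => by
    simp only [hF₁, hF₂, dotProduct_mulVec_eq_sum_smul_dotProduct_self hΨ,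
      sum_smul_dotProduct_eq_mulVec hΨ]
  intro w' b'
  obtain ⟨β, hfit, hnorm⟩ :=
    exists_sum_smul_dotProduct_eq_and_dotProduct_self_le (fun j => φ (t j)) w'
  calc F₁ (∑ i, α i • φ (t i)) b = F₂ α b := hF α b
    _ ≤ F₂ β b' := hmin β b'
    _ = F₁ (∑ j, β j • φ (t j)) b' := (hF β b').symm
    _ ≤ F₁ w' b' := by
      simp only [hF₁, hfit]
      gcongr

/-- Representer-theorem style result: a minimizer of the kernelized problem (P2)
yields a minimizer of the primal problem (P1) via w = Σ α_i φ(t_i). -/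
theorem p2_minimizer_gives_p1_minimizer
    (n d m : ℕ) (φ : (Fin n → ℝ) → (Fin d → ℝ))
    (ℓ : ℝ → ℝ) (hℓ : ConvexOn ℝ Set.univ ℓ)
    (lam : ℝ) (hlam : 0 < lam)
    (t : Fin m → (Fin n → ℝ)) (y : Fin m → ℝ)
    (Ψ : Matrix (Fin m) (Fin m) ℝ)
    (hΨ : ∀ i j, Ψ i j = φ (t i) ⬝ᵥ φ (t j))
    (F₂ : (Fin m → ℝ) → ℝ → ℝ)
    (hF₂ : ∀ α b, F₂ α b =
      lam / 2 * (α ⬝ᵥ Ψ.mulVec α) +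
      (1 / (m : ℝ)) * ∑ i, ℓ (y i * (Ψ.mulVec α i + b)))
    (F₁ : (Fin d → ℝ) → ℝ → ℝ)
    (hF₁ : ∀ w b, F₁ w b =
      lam / 2 * (w ⬝ᵥ w) +
      (1 / (m : ℝ)) * ∑ i, ℓ (y i * (w ⬝ᵥ φ (t i) + b)))
    (α : Fin m → ℝ) (b : ℝ)
    (hmin : ∀ α' b', F₂ α b ≤ F₂ α' b') :
    ∀ w' b', F₁ (∑ i, α i • φ (t i)) b ≤ F₁ w' b' :=
  p2_minimizer_gives_p1_minimizer_general n d m φ ℓ lam hlam t y Ψ hΨ F₂ hF₂ F₁ hF₁ α b hmin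
end

section
/- Let f be convex on a closed convex set X containing a minimizer x*, let x⁰,…,x^N ∈ X, η₁,…,η_N > 0, and suppose for each j that ⟨g^j, x^{j-1} - x*⟩ ≤ (1/(2η_j))(‖x^{j-1}-x*‖² - ‖x^j - x*‖²) + (η_j/2) D_G² where g^j ∈ ∂f(x^{j-1}) and ‖x - x*‖ ≤ 2D_X on X. Then, for 1 ≤ N̄ ≤ N, the weighted average x̃ = (Σ_{t=N̄}^N η_t x^{t-1}) / (Σ_{t=N̄}^N η_t) satisfies f(x̃) - f(x*) ≤ (2D_X² + (D_G²/2) Σ_{t=N̄}^N η_t²) / (Σ_{t=N̄}^N η_t). -/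
open scoped RealInnerProductSpace
open Finset

/-!
Jensen's inequality bounds `f x̃` by the `η`-weighted mean of the values `f (x (t - 1))`. The
subgradient inequality at `x*` turns each weighted gap `η t * (f (x (t - 1)) - f x*)` into at
most the right-hand side of the per-iteration inequality times `η t`, and the distance terms
there telescope to at most `‖x (N̄ - 1) - x*‖² / 2 ≤ 2 D_X²`.
-/

theorem Finset.sum_Icc_pred_sub {G : Type*} [AddCommGroup G] (r : ℕ → G) {m n : ℕ} (hmn : m ≤ n) :
    ∑ t ∈ Icc m n, (r (t - 1) - r t) = r (m - 1) - r n := by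
  have h := Finset.sum_Icc_sub hmn fun t ↦ -r (t - 1)
  simp only [Nat.add_sub_cancel, sub_neg_eq_add, neg_add_eq_sub] at h
  rw [h]

theorem Finset.sum_Icc_le_of_le_pred_sub {a r e : ℕ → ℝ} {m n : ℕ} (hmn : m ≤ n)
    (h : ∀ t ∈ Icc m n, a t ≤ (r (t - 1) - r t) / 2 + e t) (hr : 0 ≤ r n) :
    ∑ t ∈ Icc m n, a t ≤ r (m - 1) / 2 + ∑ t ∈ Icc m n, e t := by
  calc ∑ t ∈ Icc m n, a t
      ≤ ∑ t ∈ Icc m n, ((r (t - 1) - r t) / 2 + e t) := sum_le_sum h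
    _ = (r (m - 1) - r n) / 2 + ∑ t ∈ Icc m n, e t := by
      rw [sum_add_distrib, ← sum_div, sum_Icc_pred_sub r hmn]
    _ ≤ r (m - 1) / 2 + ∑ t ∈ Icc m n, e t := by linarith

theorem mul_sub_le_of_subgradient_step {E : Type*} [NormedAddCommGroup E]
    [InnerProductSpace ℝ E] {f : E → ℝ} {g p p' q : E} {η G : ℝ} (hη : 0 < η)
    (hsub : f q ≥ f p + ⟪g, q - p⟫)
    (hstep : ⟪g, p - q⟫ ≤ 1 / (2 * η) * (‖p - q‖ ^ 2 - ‖p' - q‖ ^ 2) + η / 2 * G ^ 2) :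
    η * (f p - f q) ≤ (‖p - q‖ ^ 2 - ‖p' - q‖ ^ 2) / 2 + G ^ 2 / 2 * η ^ 2 := by
  have hgap : f p - f q ≤ ⟪g, p - q⟫ := by
    rw [← neg_sub q p, inner_neg_right]
    linarith
  calc η * (f p - f q)
      ≤ η * (1 / (2 * η) * (‖p - q‖ ^ 2 - ‖p' - q‖ ^ 2) + η / 2 * G ^ 2) :=
        mul_le_mul_of_nonneg_left (hgap.trans hstep) hη.le
    _ = (‖p - q‖ ^ 2 - ‖p' - q‖ ^ 2) / 2 + G ^ 2 / 2 * η ^ 2 := by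
        field_simp

theorem robust_sa_weighted_average_bound_general
    (d : ℕ) (X : Set (EuclideanSpace ℝ (Fin d)))
    (f : EuclideanSpace ℝ (Fin d) → ℝ) (hf : ConvexOn ℝ X f)
    (xstar : EuclideanSpace ℝ (Fin d)) (hxstar : xstar ∈ X)
    (N Nbar : ℕ) (hNbar : 1 ≤ Nbar) (hN : Nbar ≤ N)
    (x : ℕ → EuclideanSpace ℝ (Fin d)) (hxX : ∀ j, x j ∈ X)
    (η : ℕ → ℝ) (hη : ∀ j, 0 < η j)
    (DX DG : ℝ) (hDX : ∀ x' ∈ X, ‖x' - xstar‖ ≤ 2 * DX)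
    (g : ℕ → EuclideanSpace ℝ (Fin d))
    (hg : ∀ j, 1 ≤ j → j ≤ N → ∀ z ∈ X, f z ≥ f (x (j - 1)) + ⟪g j, z - x (j - 1)⟫)
    (hiter : ∀ j, 1 ≤ j → j ≤ N →
      ⟪g j, x (j - 1) - xstar⟫ ≤
        (1 / (2 * η j)) * (‖x (j - 1) - xstar‖ ^ 2 - ‖x j - xstar‖ ^ 2) +
        (η j / 2) * DG ^ 2) :
    f ((∑ t ∈ Finset.Icc Nbar N, η t)⁻¹ • ∑ t ∈ Finset.Icc Nbar N, η t • x (t - 1))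
      - f xstar ≤
    (2 * DX ^ 2 + DG ^ 2 / 2 * ∑ t ∈ Finset.Icc Nbar N, η t ^ 2) /
      (∑ t ∈ Finset.Icc Nbar N, η t) := by
  set S := ∑ t ∈ Icc Nbar N, η t
  have hS : 0 < S := sum_pos (fun t _ ↦ hη t) (nonempty_Icc.2 hN)
  have hjensen : f ((Icc Nbar N).centerMass η fun t ↦ x (t - 1))
      ≤ (∑ t ∈ Icc Nbar N, η t * f (x (t - 1))) / S := by
    simpa [centerMass, smul_eq_mul, inv_mul_eq_div] using
      hf.map_centerMass_le (fun t _ ↦ (hη t).le) hS fun t _ ↦ hxX (t - 1)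
  have hregret : ∑ t ∈ Icc Nbar N, η t * (f (x (t - 1)) - f xstar)
      ≤ ‖x (Nbar - 1) - xstar‖ ^ 2 / 2 + ∑ t ∈ Icc Nbar N, DG ^ 2 / 2 * η t ^ 2 := by
    refine sum_Icc_le_of_le_pred_sub (r := fun j ↦ ‖x j - xstar‖ ^ 2) hN
      (fun t ht ↦ ?_) (sq_nonneg _)
    obtain ⟨hNbar_t, ht_N⟩ := mem_Icc.1 ht
    exact mul_sub_le_of_subgradient_step (hη t) (hg t (hNbar.trans hNbar_t) ht_N xstar hxstar)
      (hiter t (hNbar.trans hNbar_t) ht_N)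
  have hradius : ‖x (Nbar - 1) - xstar‖ ^ 2 ≤ (2 * DX) ^ 2 :=
    pow_le_pow_left₀ (norm_nonneg _) (hDX _ (hxX _)) 2
  calc f ((Icc Nbar N).centerMass η fun t ↦ x (t - 1)) - f xstar
      ≤ (∑ t ∈ Icc Nbar N, η t * f (x (t - 1))) / S - S * f xstar / S := by
        rw [mul_div_cancel_left₀ _ hS.ne']
        linarith
    _ = (∑ t ∈ Icc Nbar N, η t * (f (x (t - 1)) - f xstar)) / S := by
        simp only [mul_sub, sum_sub_distrib, ← sum_mul, sub_div, S]
    _ ≤ (2 * DX ^ 2 + DG ^ 2 / 2 * ∑ t ∈ Icc Nbar N, η t ^ 2) / S := by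
        rw [← mul_sum] at hregret
        gcongr
        linarith

/-- Deterministic skeleton of the robust stochastic approximation bound: from the
per-iteration inequalities, the weighted average of the iterates x^{N̄-1},…,x^{N-1}
satisfies the O(ΣηΔ) suboptimality bound. -/
theorem robust_sa_weighted_average_bound
    (d : ℕ) (X : Set (EuclideanSpace ℝ (Fin d))) (hXc : IsClosed X) (hX : Convex ℝ X)
    (f : EuclideanSpace ℝ (Fin d) → ℝ) (hf : ConvexOn ℝ X f)
    (xstar : EuclideanSpace ℝ (Fin d)) (hxstar : xstar ∈ X)
    (hmin : ∀ x ∈ X, f xstar ≤ f x)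
    (N Nbar : ℕ) (hNbar : 1 ≤ Nbar) (hN : Nbar ≤ N)
    (x : ℕ → EuclideanSpace ℝ (Fin d)) (hxX : ∀ j, x j ∈ X)
    (η : ℕ → ℝ) (hη : ∀ j, 0 < η j)
    (DX DG : ℝ) (hDX : ∀ x' ∈ X, ‖x' - xstar‖ ≤ 2 * DX)
    (g : ℕ → EuclideanSpace ℝ (Fin d))
    (hg : ∀ j, 1 ≤ j → j ≤ N → ∀ z ∈ X, f z ≥ f (x (j - 1)) + ⟪g j, z - x (j - 1)⟫)
    (hiter : ∀ j, 1 ≤ j → j ≤ N →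
      ⟪g j, x (j - 1) - xstar⟫ ≤
        (1 / (2 * η j)) * (‖x (j - 1) - xstar‖ ^ 2 - ‖x j - xstar‖ ^ 2) +
        (η j / 2) * DG ^ 2) :
    f ((∑ t ∈ Finset.Icc Nbar N, η t)⁻¹ • ∑ t ∈ Finset.Icc Nbar N, η t • x (t - 1))
      - f xstar ≤
    (2 * DX ^ 2 + DG ^ 2 / 2 * ∑ t ∈ Finset.Icc Nbar N, η t ^ 2) /
      (∑ t ∈ Finset.Icc Nbar N, η t) :=
  robust_sa_weighted_average_bound_general d X f hf xstar hxstar N Nbar hNbar hN x hxX η hη DX DG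
    hDX g hg hiter
end

section
/- Let p(ν) = (4πσ)^{-n/2} exp(-‖ν‖²/(4σ)) be the density of the Gaussian distribution N(0, 2σ I_n) on ℝⁿ, let ω be uniform on [0, 2π] independent of ν, and define z(t) = √2 cos(νᵀt + ω). Then for all s, t ∈ ℝⁿ, E[z(s) z(t)] = exp(-σ‖s - t‖²), the Gaussian kernel value. -/
open scoped RealInnerProductSpace
open Real MeasureTheory

/-!
Averaging over the phase `ω` kills the term `cos (⟪ν, s + t⟫ + 2ω)` of the product-to-sum formula
`2 cos x cos y = cos (x - y) + cos (x + y)`, leaving `cos ⟪s - t, ν⟫`. Its Gaussian average is the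
real part of the Gaussian Fourier integral `∫ exp (-b‖ν‖² + i⟪w, ν⟫) = (π / b)^(d/2) exp (-‖w‖² / 4b)`,
and with `b = 1 / 4σ` the prefactor `(4πσ)^(d/2)` cancels the normalisation of the density.
-/

theorem integral_cos_two_mul_add_eq_zero (c : ℝ) :
    ∫ ω in (0 : ℝ)..2 * π, cos (2 * ω + c) = 0 := by
  rw [intervalIntegral.integral_comp_mul_add cos two_ne_zero, integral_cos,
    show 2 * (2 * π) + c = c + 2 * π + 2 * π by ring, sin_add_two_pi, sin_add_two_pi]
  simp

theorem integral_two_mul_cos_add_mul_cos_add (a b : ℝ) :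
    ∫ ω in (0 : ℝ)..2 * π, 2 * cos (a + ω) * cos (b + ω) = 2 * π * cos (a - b) := by
  have h : ∀ ω, 2 * cos (a + ω) * cos (b + ω) = cos (a - b) + cos (2 * ω + (a + b)) := by
    intro ω
    rw [two_mul_cos_mul_cos]
    ring_nf
  simp_rw [h]
  rw [intervalIntegral.integral_add intervalIntegrable_const
      ((by fun_prop : Continuous fun ω => cos (2 * ω + (a + b))).intervalIntegrable _ _),
    integral_cos_two_mul_add_eq_zero, intervalIntegral.integral_const, smul_eq_mul]
  ring

theorem integral_sqrt_two_mul_cos_add_mul_div_two_pi (a b : ℝ) :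
    ∫ ω in (0 : ℝ)..2 * π, √2 * cos (a + ω) * (√2 * cos (b + ω)) / (2 * π) = cos (a - b) := by
  have h : ∀ ω, √2 * cos (a + ω) * (√2 * cos (b + ω)) = 2 * cos (a + ω) * cos (b + ω) := by
    intro ω
    linear_combination cos (a + ω) * cos (b + ω) * mul_self_sqrt (zero_le_two : (0 : ℝ) ≤ 2)
  simp_rw [h]
  rw [intervalIntegral.integral_div, integral_two_mul_cos_add_mul_cos_add]
  field_simp

section InnerProductSpace

variable {V : Type*} [NormedAddCommGroup V] [InnerProductSpace ℝ V] [FiniteDimensional ℝ V]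
  [MeasurableSpace V] [BorelSpace V]

theorem integral_cos_inner_mul_rexp_neg_mul_sq_norm {b : ℝ} (hb : 0 < b) (w : V) :
    ∫ v : V, cos ⟪w, v⟫ * rexp (-b * ‖v‖ ^ 2)
      = (π / b) ^ (Module.finrank ℝ V / 2 : ℝ) * rexp (-‖w‖ ^ 2 / (4 * b)) := by
  have hb' : 0 < (b : ℂ).re := hb
  have h := congrArg Complex.re (GaussianFourier.integral_cexp_neg_mul_sq_norm_add hb' Complex.I w)
  have hre := integral_re (GaussianFourier.integrable_cexp_neg_mul_sq_norm_add hb' Complex.I w)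
  simp only [RCLike.re_to_complex] at hre
  rw [← hre] at h
  convert h using 1
  · congr 1 with v
    rw [show -(b : ℂ) * ‖v‖ ^ 2 + Complex.I * ⟪w, v⟫
        = ((-b * ‖v‖ ^ 2 : ℝ) : ℂ) + ⟪w, v⟫ * Complex.I by push_cast; ring]
    simp only [Complex.exp_re, Complex.add_re, Complex.add_im, Complex.ofReal_re,
      Complex.ofReal_im, Complex.mul_I_re, Complex.mul_I_im, neg_zero, zero_add, add_zero]
    ring
  · have hpow : (π / b : ℂ) ^ (Module.finrank ℝ V / 2 : ℂ)
        = ((π / b) ^ (Module.finrank ℝ V / 2 : ℝ) : ℝ) := by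
      rw [Complex.ofReal_cpow (by positivity)]
      push_cast
      rfl
    have hexp : Complex.exp (Complex.I ^ 2 * ‖w‖ ^ 2 / (4 * b)) = rexp (-‖w‖ ^ 2 / (4 * b)) := by
      rw [Complex.ofReal_exp, Complex.I_sq]
      push_cast
      ring_nf
    rw [hpow, hexp, ← Complex.ofReal_mul, Complex.ofReal_re]

end InnerProductSpace

/-- Random Fourier features: with ν Gaussian N(0, 2σI) on ℝⁿ (density
p(ν) = (4πσ)^{-n/2} exp(-‖ν‖²/(4σ))) and ω uniform on [0, 2π] independent of ν,
the features z(t) = √2 cos(νᵀt + ω) satisfy E[z(s)z(t)] = exp(-σ‖s-t‖²). -/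
theorem random_fourier_features_unbiased
    (n : ℕ) (σ : ℝ) (hσ : 0 < σ) (s t : EuclideanSpace ℝ (Fin n)) :
    ∫ ν : EuclideanSpace ℝ (Fin n),
      (∫ ω in (0 : ℝ)..(2 * π),
        (Real.sqrt 2 * Real.cos (⟪ν, s⟫ + ω)) *
          (Real.sqrt 2 * Real.cos (⟪ν, t⟫ + ω)) / (2 * π)) *
      ((4 * π * σ) ^ (-(n : ℝ) / 2) * Real.exp (-‖ν‖ ^ 2 / (4 * σ)))
      = Real.exp (-σ * ‖s - t‖ ^ 2) := by
  have hb : 0 < (4 * σ)⁻¹ := by positivity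
  have integrand : ∀ ν : EuclideanSpace ℝ (Fin n),
      (∫ ω in (0 : ℝ)..(2 * π), √2 * cos (⟪ν, s⟫ + ω) * (√2 * cos (⟪ν, t⟫ + ω)) / (2 * π)) *
        ((4 * π * σ) ^ (-(n : ℝ) / 2) * rexp (-‖ν‖ ^ 2 / (4 * σ)))
      = (4 * π * σ) ^ (-(n : ℝ) / 2) * (cos ⟪s - t, ν⟫ * rexp (-(4 * σ)⁻¹ * ‖ν‖ ^ 2)) := by
    intro ν
    rw [integral_sqrt_two_mul_cos_add_mul_div_two_pi, ← inner_sub_right, real_inner_comm]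
    ring_nf
  simp_rw [integrand]
  rw [integral_const_mul, integral_cos_inner_mul_rexp_neg_mul_sq_norm hb,
    finrank_euclideanSpace_fin, div_inv_eq_mul, show π * (4 * σ) = 4 * π * σ by ring,
    ← mul_assoc, ← rpow_add (by positivity), neg_div, neg_add_cancel, rpow_zero, one_mul]
  congr 1
  field_simp
end
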